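/- Suppose (𝒳, S, γ, (Λ_a)_{a∈A}) is a spectral decomposition system for a Euclidean space 𝔥 with {Λ_a : a ∈ A} closed in L(𝒳,𝔥). Let φ : 𝒳 → [−∞,+∞] be S-invariant and let X ∈ 𝔥. Then ∂_F(φ∘γ)(X) = {Λ_a y : y ∈ ∂_F φ(γ(X)), a ∈ A_X}. -/

import Mathlib

open Filter Topology Set Metric
open scoped RealInnerProductSpace

noncomputable section

/-- A spectral decomposition system `(𝒳, S, γ, (Λ_a)_{a ∈ A})` for the space `H`:
`S` acts on `𝒳` by linear isometries (via `act`), `γ : H → 𝒳` is the spectral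
mapping, each `Λ a : 𝒳 → H` is a linear isometry, and the axioms [A], [B], [C] hold,
with `τ` the `S`-invariant ordering mapping of axiom [A]. -/
structure SDS (𝒳 H : Type*) [NormedAddCommGroup 𝒳] [InnerProductSpace ℝ 𝒳]
    [NormedAddCommGroup H] [InnerProductSpace ℝ H]
    (S : Type*) [Group S] (A : Type*) where
  act : S →* (𝒳 ≃ₗᵢ[ℝ] 𝒳)
  γ : H → 𝒳
  Λ : A → 𝒳 →ₗᵢ[ℝ] H
  τ : 𝒳 → 𝒳
  τ_inv : ∀ (s : S) (x : 𝒳), τ (act s x) = τ x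
  τ_orbit : ∀ x : 𝒳, ∃ s : S, τ x = act s x
  γΛ : ∀ (a : A) (x : 𝒳), γ (Λ a x) = τ x
  decomp : ∀ X : H, ∃ a : A, X = Λ a (γ X)
  inner_le : ∀ X Y : H, ⟪X, Y⟫ ≤ ⟪γ X, γ Y⟫

variable {𝒳 H S A : Type*} [NormedAddCommGroup 𝒳] [InnerProductSpace ℝ 𝒳]
    [NormedAddCommGroup H] [InnerProductSpace ℝ H] [Group S]

/-- The set `{Λ_a : a ∈ A}`, regarded as a subset of the space `L(𝒳, H)` of
continuous linear maps with the operator norm. -/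
def SDS.LambdaSet (𝔖 : SDS 𝒳 H S A) : Set (𝒳 →L[ℝ] H) :=
  {L | ∃ a : A, L = (𝔖.Λ a).toContinuousLinearMap}

/-- `A_X = {a ∈ A : X = Λ_a (γ X)}`. -/
def SDS.AX (𝔖 : SDS 𝒳 H S A) (X : H) : Set A := {a | X = 𝔖.Λ a (𝔖.γ X)}

/-- The Fréchet subdifferential of an extended-real-valued `f` at `x`: empty unless
`f x` is finite, in which case it is the set of `y` with
`liminf_{z → x, z ≠ x} (f(z) - f(x) - ⟨z - x, y⟩)/‖z - x‖ ≥ 0`, in ε-δ form. -/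
def fSubdiff {E : Type*} [NormedAddCommGroup E] [InnerProductSpace ℝ E]
    (f : E → EReal) (x : E) : Set E :=
  {y | (∃ r : ℝ, f x = (r : EReal)) ∧ ∀ ε : ℝ, 0 < ε → ∃ δ : ℝ, 0 < δ ∧
    ∀ z : E, ‖z - x‖ < δ → f x + ((⟪z - x, y⟫ - ε * ‖z - x‖ : ℝ) : EReal) ≤ f z}

/-
The inclusion `⊇` uses invariance: for `Z` near `X` the point `γ Z` is replaced by the
element `w` of its `S`-orbit that is aligned with `γ X + t y` (`t = ‖Z - X‖ / ε`), so that
`φ (γ Z) = φ w` while axiom [C] bounds both `‖w - γ X‖` and the loss in the linear term.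
For `⊆`, testing the subgradient inequality at `Λ_b (γ X)` with `b ∈ A_{X + tY}` shows that
`Λ_b` nearly decomposes `X` and `Y` simultaneously; closedness of `{Λ_a}` and compactness
give an exact simultaneous decomposition `X = Λ_a (γ X)`, `Y = Λ_a w`, and `w` is then a
subgradient because `φ ∘ γ ∘ Λ_a = φ`.
-/

section fSubdiff

variable {E F : Type*} [NormedAddCommGroup E] [InnerProductSpace ℝ E]
  [NormedAddCommGroup F] [InnerProductSpace ℝ F]

theorem inner_le_of_mem_fSubdiff {f : E → EReal} {x y : E} (hy : y ∈ fSubdiff f x)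
    {ε : ℝ} (hε : 0 < ε) :
    ∃ δ > 0, ∀ z, ‖z - x‖ < δ → f z ≤ f x → ⟪z - x, y⟫ ≤ ε * ‖z - x‖ := by
  obtain ⟨⟨r, hr⟩, hy⟩ := hy
  obtain ⟨δ, hδ, hδy⟩ := hy ε hε
  refine ⟨δ, hδ, fun z hz hfz => ?_⟩
  have h := (hδy z hz).trans hfz
  rw [hr, ← EReal.coe_add, EReal.coe_le_coe_iff] at h
  linarith

theorem mem_fSubdiff_comp_linearIsometry {f : F → EReal} (L : E →ₗᵢ[ℝ] F) {x w : E}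
    (hw : L w ∈ fSubdiff f (L x)) : w ∈ fSubdiff (f ∘ L) x := by
  obtain ⟨hfin, hw⟩ := hw
  refine ⟨hfin, fun ε hε => ?_⟩
  obtain ⟨δ, hδ, hδw⟩ := hw ε hε
  refine ⟨δ, hδ, fun z hz => ?_⟩
  have h := hδw (L z) (by rwa [← map_sub, L.norm_map])
  rwa [← map_sub, L.norm_map, L.inner_map_map] at h

end fSubdiff

theorem le_of_sq_le_mul {u c : ℝ} (hc : 0 ≤ c) (h : u ^ 2 ≤ c * u) : u ≤ c := by
  nlinarith

section OrbitEstimates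

variable {r d p q B ε : ℝ} (hε : 0 < ε) (hd : 0 ≤ d) (hp : |p| ≤ d * B) (hq : |q| ≤ r * B)
  (h : r ^ 2 + 2 * (d / ε) * p ≤ d ^ 2 + 2 * (d / ε) * q)
include hε hd hp hq h

theorem le_mul_of_sq_add_mul_le (hB : 0 ≤ B) : r ≤ (1 + 2 * B / ε) * d := by
  have hk : r ^ 2 ≤ d ^ 2 + 2 * B / ε * d * (r + d) :=
    calc r ^ 2 ≤ d ^ 2 + 2 * (d / ε) * (q - p) := by linarith
      _ ≤ d ^ 2 + 2 * (d / ε) * (B * (r + d)) := by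
        gcongr
        linarith [le_of_abs_le hq, neg_le_of_abs_le hp]
      _ = d ^ 2 + 2 * B / ε * d * (r + d) := by ring
  -- `(r - (1 + k) d) (r + d) = r² - k d (r + d) - d²` with `k = 2B/ε`
  by_contra! hlt
  have hpos : 0 < r + d := by nlinarith [div_nonneg (mul_nonneg zero_le_two hB) hε.le]
  nlinarith [mul_lt_mul_of_pos_right hlt hpos]

theorem sub_le_of_sq_add_mul_le : p - ε * d / 2 ≤ q := by
  rcases hd.eq_or_lt with hd0 | hd0
  · have hr0 : r = 0 := by
      subst hd0
      simpa using h
    subst hd0 hr0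
    linarith [le_of_abs_le hp, neg_le_of_abs_le hq]
  · refine le_of_mul_le_mul_left ?_ (by positivity : 0 < 2 * (d / ε))
    have : 2 * (d / ε) * (ε * d / 2) = d ^ 2 := by field_simp
    nlinarith [sq_nonneg r]

end OrbitEstimates

namespace SDS

variable (𝔖 : SDS 𝒳 H S A)

theorem norm_γ (X : H) : ‖𝔖.γ X‖ = ‖X‖ := by
  obtain ⟨a, ha⟩ := 𝔖.decomp X
  conv_rhs => rw [ha, (𝔖.Λ a).norm_map]

theorem τ_γ (X : H) : 𝔖.τ (𝔖.γ X) = 𝔖.γ X := by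
  obtain ⟨a, ha⟩ := 𝔖.decomp X
  conv_rhs => rw [ha, 𝔖.γΛ]

theorem γ_Λ_γ (a : A) (X : H) : 𝔖.γ (𝔖.Λ a (𝔖.γ X)) = 𝔖.γ X := by
  rw [𝔖.γΛ, 𝔖.τ_γ]

theorem norm_γ_sub_γ_le (U V : H) : ‖𝔖.γ U - 𝔖.γ V‖ ≤ ‖U - V‖ := by
  have hUV := 𝔖.inner_le U V
  have hγ := norm_sub_sq_real (𝔖.γ U) (𝔖.γ V)
  have h := norm_sub_sq_real U V
  rw [𝔖.norm_γ, 𝔖.norm_γ] at hγ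
  exact le_of_sq_le_sq (by linarith) (norm_nonneg _)

theorem comp_γ_Λ {φ : 𝒳 → EReal} (hφ : ∀ (s : S) (x : 𝒳), φ (𝔖.act s x) = φ x) (a : A) :
    (fun Z => φ (𝔖.γ Z)) ∘ 𝔖.Λ a = φ := by
  funext x
  obtain ⟨s, hs⟩ := 𝔖.τ_orbit x
  simp only [Function.comp_apply, 𝔖.γΛ, hs, hφ]

/-- The orbit point `w` of `γ Z` aligned with `γ X + t y`, i.e. `τ (γ X + t y) = s (γ X + t y)`
and `w = s⁻¹ (γ Z)`, satisfies `⟪Z, X + t Λ_a y⟫ ≤ ⟪w, γ X + t y⟫` by axiom [C]. -/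
theorem exists_orbit_sq_norm_add_inner_le {X : H} {a : A} (ha : a ∈ 𝔖.AX X) (Z : H) (y : 𝒳)
    (t : ℝ) : ∃ w, (∃ s, 𝔖.act s w = 𝔖.γ Z) ∧
      ‖w - 𝔖.γ X‖ ^ 2 + 2 * t * ⟪Z - X, 𝔖.Λ a y⟫
        ≤ ‖Z - X‖ ^ 2 + 2 * t * ⟪w - 𝔖.γ X, y⟫ := by
  obtain ⟨s, hs⟩ := 𝔖.τ_orbit (𝔖.γ X + t • y)
  set w := (𝔖.act s).symm (𝔖.γ Z)
  have hw : 𝔖.act s w = 𝔖.γ Z := (𝔖.act s).apply_symm_apply _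
  have hΛ : X + t • 𝔖.Λ a y = 𝔖.Λ a (𝔖.γ X + t • y) := by
    rw [map_add, map_smul, ← ha]
  have hC : ⟪Z, X + t • 𝔖.Λ a y⟫ ≤ ⟪w, 𝔖.γ X + t • y⟫ :=
    calc ⟪Z, X + t • 𝔖.Λ a y⟫ ≤ ⟪𝔖.γ Z, 𝔖.γ (X + t • 𝔖.Λ a y)⟫ := 𝔖.inner_le _ _
      _ = ⟪𝔖.act s w, 𝔖.act s (𝔖.γ X + t • y)⟫ := by rw [hΛ, 𝔖.γΛ, hs, hw]
      _ = ⟪w, 𝔖.γ X + t • y⟫ := (𝔖.act s).inner_map_map _ _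
  have hXy : ⟪X, 𝔖.Λ a y⟫ = ⟪𝔖.γ X, y⟫ := by
    conv_lhs => rw [ha]
    exact (𝔖.Λ a).inner_map_map _ _
  have hnw : ‖w‖ = ‖Z‖ := by rw [(𝔖.act s).symm.norm_map, 𝔖.norm_γ]
  refine ⟨w, ⟨s, hw⟩, ?_⟩
  rw [inner_add_right, inner_add_right, real_inner_smul_right, real_inner_smul_right] at hC
  rw [norm_sub_sq_real, norm_sub_sq_real, hnw, 𝔖.norm_γ, inner_sub_left, inner_sub_left, hXy]
  linarith

theorem Λ_mem_fSubdiff_comp_γ {φ : 𝒳 → EReal}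
    (hφ : ∀ (s : S) (x : 𝒳), φ (𝔖.act s x) = φ x) {X : H} {y : 𝒳}
    (hy : y ∈ fSubdiff φ (𝔖.γ X)) {a : A} (ha : a ∈ 𝔖.AX X) :
    𝔖.Λ a y ∈ fSubdiff (fun Z => φ (𝔖.γ Z)) X := by
  obtain ⟨hfin, hy⟩ := hy
  refine ⟨hfin, fun ε hε => ?_⟩
  set C := 1 + 2 * ‖y‖ / ε
  have hC : 0 < C := by positivity
  obtain ⟨δ, hδ, hδy⟩ := hy (ε / (2 * C)) (by positivity)
  refine ⟨δ / C, by positivity, fun Z hZ => ?_⟩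
  obtain ⟨w, ⟨s, hs⟩, hkey⟩ := 𝔖.exists_orbit_sq_norm_add_inner_le ha Z y (‖Z - X‖ / ε)
  set d := ‖Z - X‖
  set r := ‖w - 𝔖.γ X‖
  have hp : |⟪Z - X, 𝔖.Λ a y⟫| ≤ d * ‖y‖ := by
    simpa only [(𝔖.Λ a).norm_map] using abs_real_inner_le_norm (Z - X) (𝔖.Λ a y)
  have hq : |⟪w - 𝔖.γ X, y⟫| ≤ r * ‖y‖ := abs_real_inner_le_norm _ _
  have hr : r ≤ C * d := le_mul_of_sq_add_mul_le hε (norm_nonneg _) hp hq hkey (norm_nonneg _)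
  have hrδ : r < δ :=
    calc r ≤ C * d := hr
      _ < C * (δ / C) := by gcongr
      _ = δ := mul_div_cancel₀ δ hC.ne'
  have hr' : ε / (2 * C) * r ≤ ε * d / 2 :=
    calc ε / (2 * C) * r ≤ ε / (2 * C) * (C * d) := by gcongr
      _ = ε * d / 2 := by field_simp
  have hpq := sub_le_of_sq_add_mul_le hε (norm_nonneg _) hp hq hkey
  have hlin : ⟪Z - X, 𝔖.Λ a y⟫ - ε * d ≤ ⟪w - 𝔖.γ X, y⟫ - ε / (2 * C) * r := by linarith
  calc φ (𝔖.γ X) + ((⟪Z - X, 𝔖.Λ a y⟫ - ε * d : ℝ) : EReal)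
      ≤ φ (𝔖.γ X) + ((⟪w - 𝔖.γ X, y⟫ - ε / (2 * C) * r : ℝ) : EReal) := by
        gcongr
    _ ≤ φ w := hδy w hrδ
    _ = φ (𝔖.γ Z) := by rw [← hs, hφ]

theorem norm_sub_sq_le_of_mem_AX {X Y : H} {t : ℝ} {b : A} (hb : b ∈ 𝔖.AX (X + t • Y)) :
    ‖𝔖.Λ b (𝔖.γ X) - X‖ ^ 2 ≤ 2 * t * ⟪𝔖.Λ b (𝔖.γ X) - X, Y⟫ := by
  have hC : ⟪X, X + t • Y⟫ ≤ ⟪𝔖.Λ b (𝔖.γ X), X + t • Y⟫ :=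
    calc ⟪X, X + t • Y⟫ ≤ ⟪𝔖.γ X, 𝔖.γ (X + t • Y)⟫ := 𝔖.inner_le _ _
      _ = ⟪𝔖.Λ b (𝔖.γ X), 𝔖.Λ b (𝔖.γ (X + t • Y))⟫ := ((𝔖.Λ b).inner_map_map _ _).symm
      _ = ⟪𝔖.Λ b (𝔖.γ X), X + t • Y⟫ := by rw [← hb]
  rw [inner_add_right, inner_add_right, real_inner_smul_right, real_inner_smul_right,
    real_inner_self_eq_norm_sq] at hC
  rw [norm_sub_sq_real, (𝔖.Λ b).norm_map, 𝔖.norm_γ, inner_sub_left]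
  linarith

theorem exists_approx_decomp_of_mem_fSubdiff {φ : 𝒳 → EReal} {X Y : H}
    (hY : Y ∈ fSubdiff (fun Z => φ (𝔖.γ Z)) X) {ε : ℝ} (hε : 0 < ε) :
    ∃ a v, ‖v‖ ≤ ‖Y‖ ∧ ‖𝔖.Λ a (𝔖.γ X) - X‖ ≤ ε ∧ ‖𝔖.Λ a v - Y‖ ≤ ε := by
  obtain ⟨δ, hδ, hδY⟩ := inner_le_of_mem_fSubdiff hY (half_pos hε)
  obtain ⟨t, ht, ht1, htδ⟩ : ∃ t, 0 < t ∧ t ≤ 1 ∧ 2 * ‖Y‖ * t < δ := by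
    obtain ⟨c, hc, hcδ⟩ := exists_pos_mul_lt hδ (2 * ‖Y‖)
    refine ⟨min c 1, lt_min hc one_pos, min_le_right _ _, lt_of_le_of_lt ?_ hcδ⟩
    gcongr
    exact min_le_left _ _
  obtain ⟨b, hb⟩ := 𝔖.decomp (X + t • Y)
  have hZ := 𝔖.norm_sub_sq_le_of_mem_AX hb
  set Z := 𝔖.Λ b (𝔖.γ X)
  have hZδ : ‖Z - X‖ < δ := by
    refine lt_of_le_of_lt (le_of_sq_le_mul (c := 2 * ‖Y‖ * t) (by positivity) ?_) htδ
    nlinarith [real_inner_le_norm (Z - X) Y]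
  have hZε : ‖Z - X‖ ≤ t * ε := by
    refine le_of_sq_le_mul (by positivity) ?_
    nlinarith [hδY Z hZδ (le_of_eq (by rw [𝔖.γ_Λ_γ]))]
  refine ⟨b, t⁻¹ • (𝔖.γ (X + t • Y) - 𝔖.γ X), ?_, ?_, ?_⟩
  · have hγ := 𝔖.norm_γ_sub_γ_le (X + t • Y) X
    rw [add_sub_cancel_left, norm_smul, Real.norm_of_nonneg ht.le] at hγ
    rw [norm_smul, Real.norm_of_nonneg (inv_nonneg.2 ht.le), inv_mul_le_iff₀ ht]
    exact hγ
  · exact hZε.trans (mul_le_of_le_one_left hε.le ht1)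
  · have hv : 𝔖.Λ b (t⁻¹ • (𝔖.γ (X + t • Y) - 𝔖.γ X)) - Y = t⁻¹ • (X - Z) := by
      rw [map_smul, map_sub, ← hb, smul_sub, smul_add, inv_smul_smul₀ ht.ne', smul_sub]
      abel
    rw [hv, norm_smul, Real.norm_of_nonneg (inv_nonneg.2 ht.le), inv_mul_le_iff₀ ht, norm_sub_rev]
    exact hZε

theorem exists_decomp_of_mem_fSubdiff [FiniteDimensional ℝ 𝒳] [FiniteDimensional ℝ H]
    (hcl : IsClosed 𝔖.LambdaSet) {φ : 𝒳 → EReal} {X Y : H}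
    (hY : Y ∈ fSubdiff (fun Z => φ (𝔖.γ Z)) X) :
    ∃ a w, 𝔖.Λ a (𝔖.γ X) = X ∧ 𝔖.Λ a w = Y := by
  set K := (𝔖.LambdaSet ∩ closedBall 0 1) ×ˢ closedBall (0 : 𝒳) ‖Y‖
  set g : (𝒳 →L[ℝ] H) × 𝒳 → ℝ := fun p => ‖p.1 (𝔖.γ X) - X‖ + ‖p.1 p.2 - Y‖
  have hΛK : ∀ a v, ‖v‖ ≤ ‖Y‖ → ((𝔖.Λ a).toContinuousLinearMap, v) ∈ K := fun a v hv =>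
    ⟨⟨⟨a, rfl⟩, mem_closedBall_zero_iff.2 (𝔖.Λ a).norm_toContinuousLinearMap_le⟩,
      mem_closedBall_zero_iff.2 hv⟩
  have hK : IsCompact K :=
    ((isCompact_closedBall _ _).inter_left hcl).prod (isCompact_closedBall _ _)
  obtain ⟨a₀, -⟩ := 𝔖.decomp X
  obtain ⟨p, hpK, hp⟩ := hK.exists_isMinOn ⟨_, hΛK a₀ 0 (by simp)⟩
    (by fun_prop : Continuous g).continuousOn
  have hgp : g p ≤ 0 := by
    refine le_of_forall_pos_le_add fun ε hε => ?_
    obtain ⟨a, v, hv, hXa, hYa⟩ := 𝔖.exists_approx_decomp_of_mem_fSubdiff hY (half_pos hε)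
    calc g p ≤ g ((𝔖.Λ a).toContinuousLinearMap, v) := hp (hΛK a v hv)
      _ ≤ 0 + ε := by simp only [g, LinearIsometry.coe_toContinuousLinearMap]; linarith
  obtain ⟨⟨⟨a, hpa⟩, -⟩, -⟩ := hpK
  have hg0 : g p = 0 := le_antisymm hgp (by positivity)
  rw [add_eq_zero_iff_of_nonneg (norm_nonneg _) (norm_nonneg _), norm_eq_zero, norm_eq_zero,
    sub_eq_zero, sub_eq_zero, hpa] at hg0
  exact ⟨a, p.2, hg0⟩

end SDS

/-- For an `S`-invariant `φ : 𝒳 → [-∞, +∞]` and `X ∈ H`: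
`∂_F(φ ∘ γ)(X) = {Λ_a y : y ∈ ∂_F φ(γ(X)), a ∈ A_X}`. -/
theorem frechet_subdiff_spectral
    [FiniteDimensional ℝ 𝒳] [FiniteDimensional ℝ H]
    (𝔖 : SDS 𝒳 H S A) (hcl : IsClosed 𝔖.LambdaSet)
    (φ : 𝒳 → EReal) (hφ : ∀ (s : S) (x : 𝒳), φ (𝔖.act s x) = φ x)
    (X : H) :
    fSubdiff (fun Z => φ (𝔖.γ Z)) X
      = {Y | ∃ y ∈ fSubdiff φ (𝔖.γ X), ∃ a ∈ 𝔖.AX X, Y = 𝔖.Λ a y} := by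
  ext Y
  constructor
  · intro hY
    obtain ⟨a, w, hX, rfl⟩ := 𝔖.exists_decomp_of_mem_fSubdiff hcl hY
    have hw := mem_fSubdiff_comp_linearIsometry (𝔖.Λ a) (hX ▸ hY)
    rw [𝔖.comp_γ_Λ hφ] at hw
    exact ⟨w, hw, a, hX.symm, rfl⟩
  · rintro ⟨y, hy, a, ha, rfl⟩
    exact 𝔖.Λ_mem_fSubdiff_comp_γ hφ hy ha
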